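/- Let A = (Q, Σ, δ, s, F) be a DFA and let p ≥ 2. Define the pruned power semi-DFA B whose states are the sets T ⊆ Q with |T| = p whose member states have pairwise-intersecting open co-lex intervals, and with transition δ_B(T, a) = {δ(u, a) : u ∈ T} defined when this image is also a state of B. Then B contains a directed cycle if and only if there exist a nonempty string γ and p pairwise distinct states u₁, …, u_p ∈ Q with δ(u_i, γ) = u_i for all i ∈ [p] and pairwise-intersecting open co-lex intervals (inf I_{u_i}, sup I_{u_i}). -/

import Mathlib

/-- Co-lexicographic order on finite strings: lexicographic order on reverses. -/
def ColexList {Sig : Type*} [LinearOrder Sig] (a b : List Sig) : Prop :=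
  List.Lex (· < ·) a.reverse b.reverse

/-- Reflexive co-lexicographic order. -/
def ColexLe {Sig : Type*} [LinearOrder Sig] (a b : List Sig) : Prop :=
  a = b ∨ ColexList a b

/-- A finite or left-infinite string, represented by its sequence of characters read
from the right end (`none` signals that the string is exhausted). -/
def CStr (Sig : Type*) := ℕ → Option Sig

/-- The representation of a finite string as a `CStr`. -/
def toCStr {Sig : Type*} (a : List Sig) : CStr Sig := fun i => a.reverse[i]?

/-- The left-infinite string `γ^ω = ⋯γγγ` (for nonempty `γ`) as a `CStr`. -/
def omegaCStr {Sig : Type*} (γ : List Sig) : CStr Sig :=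
  fun i => γ.reverse[i % γ.length]?

/-- Strict co-lexicographic order on finite or left-infinite strings: reading from the
right, at the first position where the two strings differ, either the first string is
exhausted or its character is smaller. -/
def cstrLt {Sig : Type*} [LinearOrder Sig] (s t : CStr Sig) : Prop :=
  ∃ j, (∀ i, i < j → s i = t i) ∧
    ((s j = none ∧ t j ≠ none) ∨ ∃ a b, s j = some a ∧ t j = some b ∧ a < b)

/-- Non-strict co-lexicographic order on finite or left-infinite strings. -/
def cstrLe {Sig : Type*} [LinearOrder Sig] (s t : CStr Sig) : Prop :=
  s = t ∨ cstrLt s t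

/-- `w` is a co-lexicographic lower bound of the set `A` of finite strings. -/
def IsColexLB {Sig : Type*} [LinearOrder Sig] (w : CStr Sig) (A : Set (List Sig)) : Prop :=
  ∀ a ∈ A, cstrLe w (toCStr a)

/-- `w` is a co-lexicographic upper bound of the set `A` of finite strings. -/
def IsColexUB {Sig : Type*} [LinearOrder Sig] (w : CStr Sig) (A : Set (List Sig)) : Prop :=
  ∀ a ∈ A, cstrLe (toCStr a) w

/-- `w` is the co-lexicographic infimum of the set `A` of finite strings. -/
def IsColexInf {Sig : Type*} [LinearOrder Sig] (w : CStr Sig) (A : Set (List Sig)) : Prop :=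
  IsColexLB w A ∧ ∀ w', IsColexLB w' A → cstrLe w' w

/-- `w` is the co-lexicographic supremum of the set `A` of finite strings. -/
def IsColexSup {Sig : Type*} [LinearOrder Sig] (w : CStr Sig) (A : Set (List Sig)) : Prop :=
  IsColexUB w A ∧ ∀ w', IsColexUB w' A → cstrLe w w'

/-- The extension of a (total) DFA transition function to strings. -/
def deltaStar {Q Sig : Type*} (δ : Q → Sig → Q) (q : Q) (a : List Sig) : Q :=
  a.foldl δ q

/-- `Ireach δ s u` is the set `I_u` of strings leading from the source `s` to `u`. -/
def Ireach {Q Sig : Type*} (δ : Q → Sig → Q) (s u : Q) : Set (List Sig) :=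
  {a | deltaStar δ s a = u}

/-- Membership of a finite string in the open co-lex interval `(lo, hi)`. -/
def inOpenInterval {Sig : Type*} [LinearOrder Sig] (lo hi : CStr Sig) (a : List Sig) : Prop :=
  cstrLt lo (toCStr a) ∧ cstrLt (toCStr a) hi

/-- A set `S` of states is entangled: there is a co-lexicographically monotone sequence
of strings hitting every state of `S` infinitely often. -/
def Entangled {Q Sig : Type*} [LinearOrder Sig] (δ : Q → Sig → Q) (s : Q) (S : Set Q) : Prop :=
  ∃ a : ℕ → List Sig,
    ((∀ t t', t ≤ t' → ColexLe (a t) (a t')) ∨ (∀ t t', t ≤ t' → ColexLe (a t') (a t))) ∧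
    ∀ u ∈ S, ∀ t, ∃ t', t ≤ t' ∧ deltaStar δ s (a t') = u

/-- States of the pruned power semi-DFA `B`: subsets of size `p` whose member states
have pairwise intersecting open co-lex intervals (described by `infS`/`supS`). -/
def StateB {Q Sig : Type*} [LinearOrder Sig] (p : ℕ)
    (infS supS : Q → CStr Sig) (T : Finset Q) : Prop :=
  T.card = p ∧ ∀ u ∈ T, ∀ v ∈ T, ∃ α : List Sig,
    inOpenInterval (infS u) (supS u) α ∧ inOpenInterval (infS v) (supS v) α

/-- The transition function of the power semi-DFA, extended to strings. -/
def imageStar {Q Sig : Type*} [DecidableEq Q] (δ : Q → Sig → Q)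
    (T : Finset Q) (a : List Sig) : Finset Q :=
  a.foldl (fun T c => T.image (fun u => δ u c)) T

/-
Along a cycle of `B` each set is mapped bijectively onto the next, so `γ` induces a permutation
of the starting set `T`, and some power `γ^k` fixes every state of `T`.
Conversely, if `γ` fixes `p` distinct states, their images under every prefix of `γ` stay
pairwise distinct (the rest of `γ` maps them back) and keep pairwise intersecting intervals,
because `α ∈ (inf I_u, sup I_u)` implies `αβ ∈ (inf I_{δ(u,β)}, sup I_{δ(u,β)})`:
some `a ∈ I_u` lies below `α`, and then `aβ ∈ I_{δ(u,β)}` lies below `αβ`;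
symmetrically for the supremum.
-/

def CStr.append {Sig : Type*} (w : CStr Sig) (β : List Sig) : CStr Sig :=
  fun i => if i < β.length then β.reverse[i]? else w (i - β.length)

theorem toCStr_append {Sig : Type*} (α β : List Sig) :
    toCStr (α ++ β) = (toCStr α).append β := by
  funext i
  simp only [toCStr, CStr.append, List.reverse_append]
  split_ifs with h
  · rw [List.getElem?_append_left (by simpa using h)]
  · rw [List.getElem?_append_right (by simpa using h), List.length_reverse]

namespace CStr

variable {Sig : Type*} [LinearOrder Sig]

-- `none = ⊥`: a string that has run out sorts below every letter, as in `cstrLt`.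
noncomputable instance : LinearOrder (CStr Sig) :=
  LinearOrder.lift' (@toLex (ℕ → WithBot Sig)) toLex.injective

theorem cstrLt_iff_lt {s t : CStr Sig} : cstrLt s t ↔ s < t := by
  unfold cstrLt
  refine exists_congr fun j => and_congr_right fun _ => ?_
  refine Iff.trans ?_ (WithBot.lt_def (x := s j) (y := t j)).symm
  exact or_congr (and_congr_right fun _ => Option.ne_none_iff_exists')
    ⟨fun ⟨a, b, ha, hb, hab⟩ => ⟨a, b, hab, ha, hb⟩,
      fun ⟨a, b, hab, ha, hb⟩ => ⟨a, b, ha, hb, hab⟩⟩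

theorem cstrLe_iff_le {s t : CStr Sig} : cstrLe s t ↔ s ≤ t := by
  rw [cstrLe, cstrLt_iff_lt, le_iff_eq_or_lt]

theorem strictMono_append (β : List Sig) : StrictMono fun w : CStr Sig => w.append β := by
  intro w w' h
  obtain ⟨j, hj, hc⟩ := cstrLt_iff_lt.2 h
  refine cstrLt_iff_lt.1 ⟨j + β.length, fun i hi => ?_, ?_⟩
  · simp only [append]
    split_ifs
    · rfl
    · exact hj _ (by omega)
  · simpa only [append, if_neg (by omega : ¬ j + β.length < β.length),
      Nat.add_sub_cancel] using hc

end CStr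

section Colex

variable {Sig : Type*} [LinearOrder Sig]

theorem IsColexInf.isGLB {w : CStr Sig} {A : Set (List Sig)} (h : IsColexInf w A) :
    IsGLB (toCStr '' A) w := by
  simp only [IsColexInf, IsColexLB, CStr.cstrLe_iff_le] at h
  exact ⟨Set.forall_mem_image.2 h.1, fun w' hw' => h.2 w' fun a ha => hw' ⟨a, ha, rfl⟩⟩

theorem IsColexSup.isLUB {w : CStr Sig} {A : Set (List Sig)} (h : IsColexSup w A) :
    IsLUB (toCStr '' A) w := by
  simp only [IsColexSup, IsColexUB, CStr.cstrLe_iff_le] at h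
  exact ⟨Set.forall_mem_image.2 h.1, fun w' hw' => h.2 w' fun a ha => hw' ⟨a, ha, rfl⟩⟩

end Colex

section Order

variable {α β : Type*} [LinearOrder α] [Preorder β] {s : Set α} {t : Set β} {f : α → β}
  {a x : α} {b : β}

theorem IsGLB.lt_apply_of_mapsTo (ha : IsGLB s a) (hb : b ∈ lowerBounds t) (hf : StrictMono f)
    (hst : Set.MapsTo f s t) (hx : a < x) : b < f x := by
  obtain ⟨c, hc, hcx⟩ := (isGLB_lt_iff ha).1 hx
  exact (hb (hst hc)).trans_lt (hf hcx)

theorem IsLUB.apply_lt_of_mapsTo (ha : IsLUB s a) (hb : b ∈ upperBounds t) (hf : StrictMono f)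
    (hst : Set.MapsTo f s t) (hx : x < a) : f x < b := by
  obtain ⟨c, hc, hxc⟩ := (lt_isLUB_iff ha).1 hx
  exact (hf hxc).trans_le (hb (hst hc))

end Order

section DFA

variable {Q Sig : Type*}

theorem deltaStar_append (δ : Q → Sig → Q) (q : Q) (a b : List Sig) :
    deltaStar δ q (a ++ b) = deltaStar δ (deltaStar δ q a) b :=
  List.foldl_append ..

theorem deltaStar_flatten_replicate (δ : Q → Sig → Q) (q : Q) (γ : List Sig) (k : ℕ) :
    deltaStar δ q (List.replicate k γ).flatten = (deltaStar δ · γ)^[k] q := by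
  induction k generalizing q with
  | zero => rfl
  | succ k ih =>
    rw [List.replicate_succ, List.flatten_cons, deltaStar_append, ih,
      Function.iterate_succ_apply]

theorem imageStar_eq_image [DecidableEq Q] (δ : Q → Sig → Q) (T : Finset Q) (a : List Sig) :
    imageStar δ T a = T.image (deltaStar δ · a) := by
  induction a generalizing T with
  | nil => exact T.image_id.symm
  | cons c a ih => exact (ih _).trans (Finset.image_image ..)

theorem mapsTo_append_Ireach (δ : Q → Sig → Q) (s u : Q) (β : List Sig) :
    Set.MapsTo (· ++ β) (Ireach δ s u) (Ireach δ s (deltaStar δ u β)) := by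
  intro a (ha : deltaStar δ s a = u)
  show deltaStar δ s (a ++ β) = _
  rw [deltaStar_append, ha]

variable [LinearOrder Sig] {δ : Q → Sig → Q} {s : Q} {infS supS : Q → CStr Sig}

theorem inOpenInterval_append (hinf : ∀ u, IsColexInf (infS u) (Ireach δ s u))
    (hsup : ∀ u, IsColexSup (supS u) (Ireach δ s u)) {u : Q} {α : List Sig} (β : List Sig)
    (h : inOpenInterval (infS u) (supS u) α) :
    inOpenInterval (infS (deltaStar δ u β)) (supS (deltaStar δ u β)) (α ++ β) := by
  have hmaps : Set.MapsTo (·.append β) (toCStr '' Ireach δ s u)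
      (toCStr '' Ireach δ s (deltaStar δ u β)) := by
    rintro _ ⟨a, ha, rfl⟩
    exact ⟨a ++ β, mapsTo_append_Ireach δ s u β ha, toCStr_append a β⟩
  simp only [inOpenInterval, CStr.cstrLt_iff_lt, toCStr_append] at h ⊢
  exact ⟨(hinf u).isGLB.lt_apply_of_mapsTo (hinf _).isGLB.1 (CStr.strictMono_append β) hmaps h.1,
    (hsup u).isLUB.apply_lt_of_mapsTo (hsup _).isLUB.1 (CStr.strictMono_append β) hmaps h.2⟩

end DFA

theorem Finset.exists_iterate_eq_self_of_image_eq {α : Type*} [DecidableEq α] {f : α → α}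
    {T : Finset α} (h : T.image f = T) : ∃ k, 0 < k ∧ ∀ x ∈ T, f^[k] x = x := by
  have hmaps : Set.MapsTo f T T := fun x hx => h ▸ Finset.mem_image_of_mem f hx
  have hinj : Function.Injective (hmaps.restrict f T T) :=
    hmaps.restrict_inj.2 (Finset.injOn_of_card_image_eq (by rw [h]))
  refine ⟨(Fintype.card T).factorial, Nat.factorial_pos _, fun x hx => ?_⟩
  have := congrFun (Function.injective_iff_iterate_factorial_card_eq_id.1 hinj) ⟨x, hx⟩
  rw [hmaps.iterate_restrict] at this
  exact congrArg Subtype.val this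

section PowerDFA

variable {Q Sig : Type*} [DecidableEq Q]

theorem exists_deltaStar_eq_self_of_image_eq {δ : Q → Sig → Q} {T : Finset Q} {γ : List Sig}
    (hγ : γ ≠ []) (h : T.image (deltaStar δ · γ) = T) :
    ∃ γ' ≠ [], ∀ x ∈ T, deltaStar δ x γ' = x := by
  obtain ⟨k, hk, hfix⟩ := Finset.exists_iterate_eq_self_of_image_eq h
  refine ⟨(List.replicate k γ).flatten, ?_, fun x hx => ?_⟩
  · simpa [List.flatten_eq_nil_iff, List.mem_replicate, hk.ne'] using hγ
  · rw [deltaStar_flatten_replicate, hfix x hx]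

theorem card_image_deltaStar_take {δ : Q → Sig → Q} {T : Finset Q} {γ : List Sig}
    (h : T.image (deltaStar δ · γ) = T) (j : ℕ) :
    (T.image (deltaStar δ · (γ.take j))).card = T.card := by
  refine le_antisymm Finset.card_image_le ?_
  calc T.card
      = ((T.image (deltaStar δ · (γ.take j))).image (deltaStar δ · (γ.drop j))).card := by
        rw [Finset.image_image]
        simp only [Function.comp_def, ← deltaStar_append, List.take_append_drop, h]
    _ ≤ (T.image (deltaStar δ · (γ.take j))).card := Finset.card_image_le

variable [LinearOrder Sig] {δ : Q → Sig → Q} {s : Q} {infS supS : Q → CStr Sig} {p : ℕ}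

theorem StateB.image_deltaStar (hinf : ∀ u, IsColexInf (infS u) (Ireach δ s u))
    (hsup : ∀ u, IsColexSup (supS u) (Ireach δ s u)) {T : Finset Q} (hT : StateB p infS supS T)
    (β : List Sig) (hcard : (T.image (deltaStar δ · β)).card = p) :
    StateB p infS supS (T.image (deltaStar δ · β)) := by
  refine ⟨hcard, ?_⟩
  simp only [Finset.forall_mem_image]
  intro u hu v hv
  obtain ⟨α, hαu, hαv⟩ := hT.2 u hu v hv
  exact ⟨α ++ β, inOpenInterval_append hinf hsup β hαu,
    inOpenInterval_append hinf hsup β hαv⟩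

end PowerDFA

theorem stmt_16_general {Q Sig : Type*} [DecidableEq Q] [LinearOrder Sig]
    (δ : Q → Sig → Q) (s : Q) (p : ℕ)
    (infS supS : Q → CStr Sig)
    (hinf : ∀ u, IsColexInf (infS u) (Ireach δ s u))
    (hsup : ∀ u, IsColexSup (supS u) (Ireach δ s u)) :
    (∃ (γ : List Sig) (T : Finset Q), γ ≠ [] ∧ StateB p infS supS T ∧
       (∀ j ≤ γ.length, StateB p infS supS (imageStar δ T (γ.take j))) ∧
       imageStar δ T γ = T)
    ↔
    (∃ (γ : List Sig) (u : Fin p → Q), γ ≠ [] ∧ Function.Injective u ∧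
       (∀ i, deltaStar δ (u i) γ = u i) ∧
       ∀ i j, ∃ α : List Sig,
         inOpenInterval (infS (u i)) (supS (u i)) α ∧
         inOpenInterval (infS (u j)) (supS (u j)) α) := by
  simp only [imageStar_eq_image]
  constructor
  · rintro ⟨γ, T, hγ, hT, -, hcyc⟩
    obtain ⟨γ', hγ', hfix⟩ := exists_deltaStar_eq_self_of_image_eq hγ hcyc
    let e := T.equivFinOfCardEq hT.1
    exact ⟨γ', fun i => e.symm i, hγ', Subtype.val_injective.comp e.symm.injective,
      fun i => hfix _ (e.symm i).2, fun i j => hT.2 _ (e.symm i).2 _ (e.symm j).2⟩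
  · rintro ⟨γ, u, hγ, hu, hfix, hint⟩
    set T := Finset.univ.image u
    have hcyc : T.image (deltaStar δ · γ) = T := by
      simp only [T, Finset.image_image, Function.comp_def, hfix]
    have hT : StateB p infS supS T := by
      refine ⟨by simp [T, Finset.card_image_of_injective _ hu], ?_⟩
      simpa only [T, Finset.forall_mem_image, Finset.mem_univ, forall_const] using hint
    exact ⟨γ, T, hγ, hT, fun j _ => hT.image_deltaStar hinf hsup _
      ((card_image_deltaStar_take hcyc j).trans hT.1), hcyc⟩

/-- The pruned power semi-DFA `B` contains a directed cycle (passing only through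
states of `B`) if and only if there are a nonempty string `γ` and `p` pairwise
distinct states `u_1, …, u_p` with `δ(u_i, γ) = u_i` whose open co-lex intervals
pairwise intersect. -/
theorem stmt_16 {Q Sig : Type*} [Fintype Q] [DecidableEq Q] [LinearOrder Sig]
    (δ : Q → Sig → Q) (s : Q) (p : ℕ) (hp : 2 ≤ p)
    (hacc : ∀ u : Q, ∃ a, deltaStar δ s a = u)
    (infS supS : Q → CStr Sig)
    (hinf : ∀ u, IsColexInf (infS u) (Ireach δ s u))
    (hsup : ∀ u, IsColexSup (supS u) (Ireach δ s u)) :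
    (∃ (γ : List Sig) (T : Finset Q), γ ≠ [] ∧ StateB p infS supS T ∧
       (∀ j ≤ γ.length, StateB p infS supS (imageStar δ T (γ.take j))) ∧
       imageStar δ T γ = T)
    ↔
    (∃ (γ : List Sig) (u : Fin p → Q), γ ≠ [] ∧ Function.Injective u ∧
       (∀ i, deltaStar δ (u i) γ = u i) ∧
       ∀ i j, ∃ α : List Sig,
         inOpenInterval (infS (u i)) (supS (u i)) α ∧
         inOpenInterval (infS (u j)) (supS (u j)) α) :=
  stmt_16_general δ s p infS supS hinf hsup
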